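/- The 6-dimensional hypercube Q_6 does not admit three completely independent spanning trees. -/

import Mathlib

open SimpleGraph

/-- `T` is a spanning tree of `G`: a subgraph of `G` (on the same vertex set) that is a tree. -/
def IsSpanningTreeOf {V : Type*} (G T : SimpleGraph V) : Prop :=
  T ≤ G ∧ T.IsTree

/-- A family of spanning trees of `G` are *completely independent* if for every pair of
distinct vertices `x ≠ y` and distinct indices `i ≠ j`, the (unique) paths from `x` to `y`
in `T i` and `T j` share no edges, and share no vertices except `x` and `y`. -/
def AreCISTs {V : Type*} {k : ℕ} (G : SimpleGraph V) (T : Fin k → SimpleGraph V) : Prop :=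
  (∀ i, IsSpanningTreeOf G (T i)) ∧
  ∀ x y : V, x ≠ y → ∀ i j : Fin k, i ≠ j →
    ∀ p : (T i).Walk x y, ∀ q : (T j).Walk x y, p.IsPath → q.IsPath →
      (∀ e ∈ p.edges, e ∉ q.edges) ∧
      (∀ v ∈ p.support, v ∈ q.support → v = x ∨ v = y)

/-- The `n`-dimensional hypercube: vertices are functions `Fin n → ZMod 2`, adjacent iff
they differ in exactly one coordinate. -/
def hypercube (n : ℕ) : SimpleGraph (Fin n → ZMod 2) where
  Adj x y := hammingDist x y = 1
  symm := ⟨fun x y h => by change hammingDist x y = 1 at h; change hammingDist y x = 1; rwa [hammingDist_comm]⟩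
  loopless := ⟨fun x h => by simp [hammingDist_self] at h⟩

/-- `G` is `k`-connected: it has more than `k` vertices and remains connected after
removing any set of fewer than `k` vertices. -/
def KConnected {V : Type*} (G : SimpleGraph V) (k : ℕ) : Prop :=
  k < Nat.card V ∧
  ∀ s : Finset V, s.card < k → ((G.induce ((↑s : Set V)ᶜ))).Connected

/-- `G` is `k`-regular: every vertex has exactly `k` neighbours. -/
def IsKRegular {V : Type*} (G : SimpleGraph V) (k : ℕ) : Prop :=
  ∀ v : V, (G.neighborSet v).ncard = k

/-
Q₆ is bipartite with an even side X of 32 vertices, and each tree Tᵢ has 63 edges, all crossing,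
so the degrees of Tᵢ sum to 63 over X. A vertex is inner (of degree ≥ 2) in at most one tree, and at
every vertex the two other trees use at least one edge each, so Tᵢ has degree ≤ 4 everywhere. If Aᵢ
is the set of inner vertices of Tᵢ in X, then 63 ≤ 4|Aᵢ| + (32 - |Aᵢ|), so |Aᵢ| ≥ 11; but the Aᵢ are
disjoint subsets of X, and 33 > 32.
-/

open scoped Finset

theorem Equivalence.forall_or_forall_of_forall_or {α : Sort*} {R S : α → α → Prop}
    (hR : Equivalence R) (hS : Equivalence S) (h : ∀ x y, R x y ∨ S x y) :
    (∀ x y, R x y) ∨ ∀ x y, S x y := by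
  by_contra! ⟨⟨a, b, hab⟩, ⟨c, d, hcd⟩⟩
  obtain ⟨z, haz⟩ : ∃ z, ¬ S a z := by
    by_contra! hS_a
    exact hcd (hS.trans (hS.symm (hS_a c)) (hS_a d))
  have hbz : ¬ S b z := fun hbz => haz (hS.trans ((h a b).resolve_left hab) hbz)
  exact hab (hR.trans ((h a z).resolve_right haz) (hR.symm ((h b z).resolve_right hbz)))

theorem SimpleGraph.IsAcyclic.not_reachable_induce_compl_singleton {V : Type*}
    {T : SimpleGraph V} (hT : T.IsAcyclic) {v a b : V} (ha : T.Adj v a) (hb : T.Adj v b)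
    (hab : a ≠ b) : ¬ (T.induce {v}ᶜ).Reachable ⟨a, ha.ne'⟩ ⟨b, hb.ne'⟩ := by
  classical
  rintro ⟨p⟩
  let q : T.Walk a b := p.map (Embedding.induce _).toHom
  have hvq : v ∉ q.support := fun hv => by
    obtain ⟨w, -, hw⟩ := List.mem_map.mp (Walk.support_map _ p ▸ hv)
    exact w.2 hw
  have hpath : (Walk.cons ha.symm (Walk.cons hb Walk.nil)).IsPath := by
    simp [Walk.isPath_def, ha.ne', hb.ne, hab]
  have hunique := (hT.subsingleton_path a b).elim q.toPath ⟨_, hpath⟩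
  apply hvq (q.support_toPath_subset_support _)
  rw [hunique]
  simp

section CIST

variable {V : Type*} {k : ℕ} {G : SimpleGraph V} {T : Fin k → SimpleGraph V}

theorem AreCISTs.eq_of_adj (hC : AreCISTs G T) {i j : Fin k} {a b : V} (hi : (T i).Adj a b)
    (hj : (T j).Adj a b) : i = j := by
  by_contra hij
  have hp : (Walk.cons hi Walk.nil).IsPath := by simp [hi.ne]
  have hq : (Walk.cons hj Walk.nil).IsPath := by simp [hj.ne]
  exact (hC.2 a b hi.ne i j hij _ _ hp hq).1 s(a, b) (by simp) (by simp)

theorem AreCISTs.reachable_induce_or (hC : AreCISTs G T) {i j : Fin k} (hij : i ≠ j) (v : V)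
    (x y : ({v}ᶜ : Set V)) :
    ((T i).induce {v}ᶜ).Reachable x y ∨ ((T j).induce {v}ᶜ).Reachable x y := by
  classical
  obtain ⟨x, hx⟩ := x
  obtain ⟨y, hy⟩ := y
  rcases eq_or_ne x y with rfl | hxy
  · exact Or.inl Reachable.rfl
  obtain ⟨p, hp⟩ := ((hC.1 i).2.connected.preconnected x y).some.toPath
  obtain ⟨q, hq⟩ := ((hC.1 j).2.connected.preconnected x y).some.toPath
  have hcommon := (hC.2 x y hxy i j hij p q hp hq).2 v
  by_cases hvp : v ∈ p.support
  · have hvq : v ∉ q.support := fun hvq =>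
      (hcommon hvp hvq).elim (fun h => hx h.symm) (fun h => hy h.symm)
    exact Or.inr ⟨q.induce {v}ᶜ fun w hw (h : w = v) => hvq (h ▸ hw)⟩
  · exact Or.inl ⟨p.induce {v}ᶜ fun w hw (h : w = v) => hvp (h ▸ hw)⟩

/-- Removing `v` disconnects both trees, yet by complete independence any two other vertices
stay connected in one of them. -/
theorem AreCISTs.eq_of_adj_of_adj (hC : AreCISTs G T) {i j : Fin k} {v a b c d : V}
    (ha : (T i).Adj v a) (hb : (T i).Adj v b) (hab : a ≠ b)
    (hc : (T j).Adj v c) (hd : (T j).Adj v d) (hcd : c ≠ d) : i = j := by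
  by_contra hij
  rcases Equivalence.forall_or_forall_of_forall_or (reachable_is_equivalence _)
    (reachable_is_equivalence _) (hC.reachable_induce_or hij v) with h | h
  · exact (hC.1 i).2.isAcyclic.not_reachable_induce_compl_singleton ha hb hab (h _ _)
  · exact (hC.1 j).2.isAcyclic.not_reachable_induce_compl_singleton hc hd hcd (h _ _)

variable [Fintype V] [∀ i, DecidableRel (T i).Adj]

theorem AreCISTs.eq_of_two_le_degree (hC : AreCISTs G T) {i j : Fin k} {v : V}
    (hi : 2 ≤ (T i).degree v) (hj : 2 ≤ (T j).degree v) : i = j := by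
  rw [← card_neighborFinset_eq_degree] at hi hj
  obtain ⟨a, ha, b, hb, hab⟩ := Finset.one_lt_card.mp hi
  obtain ⟨c, hc, d, hd, hcd⟩ := Finset.one_lt_card.mp hj
  rw [mem_neighborFinset] at ha hb hc hd
  exact hC.eq_of_adj_of_adj ha hb hab hc hd hcd

theorem AreCISTs.sum_card_filter_two_le_degree_le [DecidableEq V] (hC : AreCISTs G T)
    (X : Finset V) : ∑ i, #{v ∈ X | 2 ≤ (T i).degree v} ≤ #X := by
  rw [← Finset.card_biUnion]
  · exact Finset.card_le_card (Finset.biUnion_subset.mpr fun i _ => Finset.filter_subset _ _)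
  · intro i _ j _ hij
    exact Finset.disjoint_filter.mpr fun v _ hi hj => hij (hC.eq_of_two_le_degree hi hj)

variable [DecidableRel G.Adj]

theorem AreCISTs.sum_degree_le [DecidableEq V] (hC : AreCISTs G T) (v : V) :
    ∑ i, (T i).degree v ≤ G.degree v := by
  simp only [← card_neighborFinset_eq_degree]
  rw [← Finset.card_biUnion]
  · refine Finset.card_le_card fun w hw => ?_
    obtain ⟨i, -, hw⟩ := Finset.mem_biUnion.mp hw
    rw [mem_neighborFinset] at hw ⊢
    exact (hC.1 i).1 hw
  · intro i _ j _ hij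
    rw [Function.onFun, Finset.disjoint_left]
    intro w hi hj
    rw [mem_neighborFinset] at hi hj
    exact hij (hC.eq_of_adj hi hj)

theorem AreCISTs.degree_add_le [DecidableEq V] [Nontrivial V] (hC : AreCISTs G T) (i : Fin k)
    (v : V) : (T i).degree v + k ≤ G.degree v + 1 := by
  have hothers : #(Finset.univ.erase i) • 1 ≤ ∑ j ∈ Finset.univ.erase i, (T j).degree v :=
    Finset.card_nsmul_le_sum _ _ _ fun j _ =>
      (hC.1 j).2.connected.preconnected.degree_pos_of_nontrivial v
  rw [Finset.card_erase_of_mem (Finset.mem_univ i), Finset.card_univ, Fintype.card_fin,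
    smul_eq_mul, mul_one] at hothers
  have hsplit := Finset.add_sum_erase Finset.univ (fun j => (T j).degree v) (Finset.mem_univ i)
  have hsum := hC.sum_degree_le v
  have hk := i.pos
  omega

theorem AreCISTs.card_add_mul_le [DecidableEq V] [Nontrivial V] (hC : AreCISTs G T)
    {X : Finset V} (hX : G.IsBipartiteWith X (Xᶜ : Finset V)) {Δ : ℕ}
    (hΔ : ∀ v, G.degree v ≤ Δ) (i : Fin k) :
    Fintype.card V + k * #{v ∈ X | 2 ≤ (T i).degree v} ≤
      Δ * #{v ∈ X | 2 ≤ (T i).degree v} + #X + 1 := by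
  have hedges : ∑ v ∈ X, (T i).degree v + 1 = Fintype.card V := by
    rw [isBipartiteWith_sum_degrees_eq_card_edges
      ⟨hX.disjoint, fun a b hab => hX.mem_of_adj ((hC.1 i).1 hab)⟩]
    exact (hC.1 i).2.card_edgeFinset
  have hsplit := Finset.sum_filter_add_sum_filter_not X (fun v => 2 ≤ (T i).degree v)
    fun v => (T i).degree v
  have hcard := Finset.card_filter_add_card_filter_not (s := X) (fun v => 2 ≤ (T i).degree v)
  have hleaves : ∑ v ∈ X with ¬ 2 ≤ (T i).degree v, (T i).degree v ≤
      #{v ∈ X | ¬ 2 ≤ (T i).degree v} • 1 :=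
    Finset.sum_le_card_nsmul _ _ _ fun v hv => by have := (Finset.mem_filter.mp hv).2; omega
  have hinner : ∑ v ∈ X with 2 ≤ (T i).degree v, ((T i).degree v + k) ≤
      #{v ∈ X | 2 ≤ (T i).degree v} • (Δ + 1) :=
    Finset.sum_le_card_nsmul _ _ _ fun v _ =>
      (hC.degree_add_le i v).trans (Nat.add_le_add_right (hΔ v) 1)
  rw [Finset.sum_add_distrib, Finset.sum_const, smul_eq_mul, smul_eq_mul] at hinner
  rw [smul_eq_mul, mul_one] at hleaves
  linarith

end CIST

namespace hypercube

theorem exists_eq_add_single_of_adj {n : ℕ} {x y : Fin n → ZMod 2} (h : (hypercube n).Adj x y) :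
    ∃ t, y = x + Pi.single t 1 := by
  obtain ⟨t, ht⟩ := Finset.card_eq_one.mp (h : hammingDist x y = 1)
  refine ⟨t, funext fun s => ?_⟩
  have hs : x s ≠ y s ↔ s = t := by
    rw [← Finset.mem_singleton, ← ht, Finset.mem_filter]
    simp
  by_cases hst : s = t
  · subst hst
    have hne := hs.mpr rfl
    revert hne
    simp only [Pi.add_apply, Pi.single_eq_same]
    generalize x s = a
    generalize y s = b
    revert a b
    decide
  · simpa [hst] using (not_not.mp (hs.not.mpr hst)).symm

theorem sum_add_single {n : ℕ} (x : Fin n → ZMod 2) (t : Fin n) :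
    ∑ s, (x + Pi.single t 1 : Fin n → ZMod 2) s = ∑ s, x s + 1 := by
  simp [Finset.sum_add_distrib]

theorem degree_le (n : ℕ) [DecidableRel (hypercube n).Adj] (x : Fin n → ZMod 2) :
    (hypercube n).degree x ≤ n :=
  calc (hypercube n).degree x = #((hypercube n).neighborFinset x) :=
        (card_neighborFinset_eq_degree _ _).symm
    _ ≤ #(Finset.univ.image fun t => x + Pi.single t 1) := Finset.card_le_card fun y hy => by
        obtain ⟨t, rfl⟩ := exists_eq_add_single_of_adj ((mem_neighborFinset _ _ _).mp hy)
        simp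
    _ ≤ n := Finset.card_image_le.trans (by simp)

def evenWeight (n : ℕ) : Finset (Fin n → ZMod 2) := {x | ∑ s, x s = 0}

theorem isBipartiteWith_evenWeight (n : ℕ) :
    (hypercube n).IsBipartiteWith (evenWeight n) ((evenWeight n)ᶜ : Finset _) := by
  refine ⟨Finset.disjoint_coe.mpr disjoint_compl_right, fun x y h => ?_⟩
  obtain ⟨t, rfl⟩ := exists_eq_add_single_of_adj h
  simp only [evenWeight, Finset.coe_compl, Set.mem_compl_iff, Finset.mem_coe, Finset.mem_filter,
    Finset.mem_univ, true_and, sum_add_single]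
  generalize ∑ s, x s = a
  revert a
  decide

theorem card_evenWeight (n : ℕ) : #(evenWeight (n + 1)) = 2 ^ n := by
  have hswap : #(evenWeight (n + 1)) = #(evenWeight (n + 1))ᶜ := by
    have hflip : ∀ x : Fin (n + 1) → ZMod 2, x + Pi.single 0 1 + Pi.single 0 1 = x := fun x => by
      rw [add_assoc, ZModModule.add_self, add_zero]
    have hmem : ∀ x : Fin (n + 1) → ZMod 2,
        x + Pi.single 0 1 ∈ evenWeight (n + 1) ↔ x ∉ evenWeight (n + 1) := fun x => by
      simp only [evenWeight, Finset.mem_filter, Finset.mem_univ, true_and, sum_add_single]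
      generalize ∑ s, x s = a
      revert a
      decide
    refine Finset.card_nbij' (· + Pi.single 0 1) (· + Pi.single 0 1) ?_ ?_ ?_ ?_ <;>
      intro x _ <;>
      simp_all
  have htotal := Finset.card_add_card_compl (evenWeight (n + 1))
  simp only [Fintype.card_pi, ZMod.card, Finset.prod_const, Finset.card_univ,
    Fintype.card_fin, pow_succ] at htotal
  omega

end hypercube

/-- The 6-dimensional hypercube `Q₆` does not admit three completely independent
spanning trees. -/
theorem hypercube_six_no_three_cists :
    ¬ ∃ T : Fin 3 → SimpleGraph (Fin 6 → ZMod 2), AreCISTs (hypercube 6) T := by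
  classical
  rintro ⟨T, hC⟩
  have hinner (i : Fin 3) :=
    hC.card_add_mul_le (hypercube.isBipartiteWith_evenWeight 6) (hypercube.degree_le 6) i
  have hdisjoint := hC.sum_card_filter_two_le_degree_le (hypercube.evenWeight 6)
  have hhalf : #(hypercube.evenWeight 6) = 32 := hypercube.card_evenWeight 5
  have hV : Fintype.card (Fin 6 → ZMod 2) = 64 := by simp
  rw [Fin.sum_univ_three] at hdisjoint
  have := hinner 0
  have := hinner 1
  have := hinner 2
  omega
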